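/- arXiv:1709.05995 — 2 statements merged into one kernel-verified Lean document; each statement's English description precedes it below -/
import Mathlib

section
/- Let P be a finite set of at least 3 points in general position in the plane and let Π be a convex decomposition of P with no deletable edges. Let N be the set of arcs u→v of the directed graph →G(Π) such that the edge uv is not contractible from u to v, let f : N → A(→G(Π)) be defined by f(u→v) = x_uv→u where x_uv is the witness vertex provided by the non-contractibility characterization, and let U be the set of points u ∈ P for which there exist two distinct arcs u→v, u→w ∈ N with f(u→v) = f(u→w). If U ≠ ∅, then there is an injective function g : U → A(→G(Π)) such that for every u ∈ U, the arc g(u) is not in the image of f. -/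
open Set

/-- Points of the plane. -/
abbrev Pt := ℝ × ℝ

/-- `P` is in general position: no three (distinct) points of `P` are collinear. -/
def GenPos (P : Finset Pt) : Prop :=
  ∀ p ∈ P, ∀ q ∈ P, ∀ r ∈ P, p ≠ q → q ≠ r → p ≠ r →
    ¬ Collinear ℝ ({p, q, r} : Set Pt)

/-- `S` is the vertex set of a convex polygon with vertices in `P`:
`S ⊆ P`, `|S| ≥ 3`, and every point of `S` is an extreme point of `conv S`. -/
def IsPolygonOf (P S : Finset Pt) : Prop :=
  S ⊆ P ∧ 3 ≤ S.card ∧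
    ∀ x ∈ S, x ∈ Set.extremePoints ℝ (convexHull ℝ (S : Set Pt))

/-- The segment `ab` is a side of the convex polygon with vertex set `S`:
`a b ∈ S` are distinct and all other vertices lie strictly on one side of the
line through `a` and `b`. -/
def IsSideOf (S : Finset Pt) (a b : Pt) : Prop :=
  a ∈ S ∧ b ∈ S ∧ a ≠ b ∧
    ∃ l : Pt →ₗ[ℝ] ℝ, ∃ c : ℝ, l a = c ∧ l b = c ∧
      ∀ x ∈ S, x ≠ a → x ≠ b → l x < c

/-- `D` is a convex decomposition of `P`: a finite family of convex polygons with
vertices in `P`, with pairwise disjoint interiors, whose union is `conv P`, and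
such that no point of `P` lies in the interior of any polygon of `D`. -/
def IsConvexDecomp (P : Finset Pt) (D : Finset (Finset Pt)) : Prop :=
  (∀ S ∈ D, IsPolygonOf P S) ∧
  (∀ S ∈ D, ∀ T ∈ D, S ≠ T →
    interior (convexHull ℝ (S : Set Pt)) ∩ interior (convexHull ℝ (T : Set Pt)) = ∅) ∧
  (⋃ S ∈ D, convexHull ℝ (S : Set Pt)) = convexHull ℝ (P : Set Pt) ∧
  (∀ p ∈ P, ∀ S ∈ D, p ∉ interior (convexHull ℝ (S : Set Pt)))

/-- `ab` is an edge of the decomposition `D`: a side of some polygon of `D`. -/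
def IsEdgeOf (D : Finset (Finset Pt)) (a b : Pt) : Prop :=
  ∃ S ∈ D, IsSideOf S a b

/-- The edge set of the skeleton graph `G(D)`, as unordered pairs. -/
def skeletonEdges (D : Finset (Finset Pt)) : Set (Sym2 Pt) :=
  {e | ∃ a b, IsEdgeOf D a b ∧ e = s(a, b)}

/-- `ab` is an interior edge of `D`: an edge of `D` not contained in the
boundary of `conv P`. -/
def IsInteriorEdge (P : Finset Pt) (D : Finset (Finset Pt)) (a b : Pt) : Prop :=
  IsEdgeOf D a b ∧ ¬ (segment ℝ a b ⊆ frontier (convexHull ℝ (P : Set Pt)))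

/-- The interior edge `ab` of `D` is deletable: removing it from the skeleton
graph yields the skeleton graph of a convex decomposition of `P`. -/
def Deletable (P : Finset Pt) (D : Finset (Finset Pt)) (a b : Pt) : Prop :=
  IsInteriorEdge P D a b ∧
    ∃ D' : Finset (Finset Pt), IsConvexDecomp P D' ∧
      skeletonEdges D' = skeletonEdges D \ {s(a, b)}

/-- The edge set of the graph `G(D)/uv` obtained by contracting the edge `uv`
from `u` to `v`: delete all edges at `u` and join each former neighbor
`x ≠ v` of `u` to `v`. -/
def contractedEdges (D : Finset (Finset Pt)) (u v : Pt) : Set (Sym2 Pt) :=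
  {e ∈ skeletonEdges D | u ∉ e} ∪
    {e | ∃ x, x ≠ v ∧ s(x, u) ∈ skeletonEdges D ∧ e = s(x, v)}

/-- The interior edge `uv` of `D` is contractible from `u` to `v`:
the contracted graph `G(D)/uv` is the skeleton graph of a convex
decomposition of `P \ {u}`. -/
def Contractible (P : Finset Pt) (D : Finset (Finset Pt)) (u v : Pt) : Prop :=
  IsInteriorEdge P D u v ∧
    ∃ D' : Finset (Finset Pt), IsConvexDecomp (P.erase u) D' ∧
      skeletonEdges D' = contractedEdges D u v

/-- The arc `u → v` of the directed graph `→G(D)`: `uv` is an interior edge of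
`D` and `u` is a reflex vertex of the union `Q_{uv}` of the two polygons of `D`
sharing the edge `uv`, i.e. `u` lies in the interior of `conv (Q_{uv})`. -/
def Arc (P : Finset Pt) (D : Finset (Finset Pt)) (u v : Pt) : Prop :=
  IsInteriorEdge P D u v ∧
    ∃ S ∈ D, ∃ T ∈ D, S ≠ T ∧ IsSideOf S u v ∧ IsSideOf T u v ∧
      u ∈ interior (convexHull ℝ ((S ∪ T : Finset Pt) : Set Pt))

/-- The ray with origin `a` containing the segment `ab`. -/
def ray (a b : Pt) : Set Pt := {p | ∃ t : ℝ, 0 ≤ t ∧ p = a + t • (b - a)}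

/-- The open triangular region with vertices `a`, `b`, `c`. -/
def openTriangle (a b c : Pt) : Set Pt :=
  interior (convexHull ℝ ({a, b, c} : Set Pt))

/-- The witness configuration of Lemma 1 showing that the edge `uv` is not
contractible from `u` to `v`: there are edges `yx` and `xu` on the boundary of
a common polygon of `D` having `u` as a vertex, such that the ray `r(yx)` meets
the edge `uv` at a point `u_t` with `u ≠ u_t ≠ v` and the open triangle
`x u_t u` contains no point of `P`. -/
def WitnessAt (P : Finset Pt) (D : Finset (Finset Pt)) (u v x : Pt) : Prop :=
  x ∈ P ∧ ∃ y ∈ P,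
    (∃ S ∈ D, u ∈ S ∧ IsSideOf S y x ∧ IsSideOf S x u) ∧
    ∃ ut ∈ ray y x, ut ∈ segment ℝ u v ∧ ut ≠ u ∧ ut ≠ v ∧
      ∀ p ∈ P, p ∉ openTriangle x ut u

/-- **Lemma 2.** If `Π` has no deletable edges and `U ≠ ∅`, then there is an
injective function `g : U → A(→G(Π))` whose values avoid the image of `f`. -/
theorem exists_g_avoiding_image_f
    (P : Finset Pt) (hP : 3 ≤ P.card) (hgp : GenPos P)
    (D : Finset (Finset Pt)) (hD : IsConvexDecomp P D)
    (hnodel : ∀ a b, ¬ Deletable P D a b)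
    (N : Set (Pt × Pt))
    (hN : N = {p : Pt × Pt | Arc P D p.1 p.2 ∧ ¬ Contractible P D p.1 p.2})
    (x : Pt → Pt → Pt)
    (hx : ∀ p ∈ N, WitnessAt P D p.1 p.2 (x p.1 p.2) ∧ Arc P D (x p.1 p.2) p.1)
    (f : Pt × Pt → Pt × Pt)
    (hf : ∀ p : Pt × Pt, f p = (x p.1 p.2, p.1))
    (U : Set Pt)
    (hU : U = {u : Pt | ∃ v w, v ≠ w ∧ (u, v) ∈ N ∧ (u, w) ∈ N ∧
      f (u, v) = f (u, w)})
    (hUne : U.Nonempty) :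
    ∃ g : Pt → Pt × Pt, Set.InjOn g U ∧
      ∀ u ∈ U, Arc P D (g u).1 (g u).2 ∧ g u ∉ f '' N := by
  classical
  -- the set of arcs of the directed graph
  set A : Set (Pt × Pt) := {p : Pt × Pt | Arc P D p.1 p.2} with hA
  have hArcP : ∀ {a b : Pt}, Arc P D a b → a ∈ P ∧ b ∈ P := by
    rintro a b ⟨-, S, hS, T, hT, -, hSide, -⟩
    have hSP : S ⊆ P := (hD.1 S hS).1
    exact ⟨hSP hSide.1, hSP hSide.2.1⟩
  have hNA : N ⊆ A := by
    intro p hp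
    rw [hN] at hp
    exact hp.1
  have hAfin : A.Finite := by
    refine (Set.Finite.prod P.finite_toSet P.finite_toSet).subset ?_
    rintro ⟨a, b⟩ hab
    have h := hArcP hab
    exact ⟨h.1, h.2⟩
  have hNfin : N.Finite := hAfin.subset hNA
  have hfNA : f '' N ⊆ A := by
    rintro q ⟨p, hp, rfl⟩
    have h2 := (hx p hp).2
    rw [hf p]
    exact h2
  -- choose the two colliding arcs at each `u ∈ U`
  have hUch : ∀ u, u ∈ U → ∃ v w, v ≠ w ∧ (u, v) ∈ N ∧ (u, w) ∈ N ∧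
      f (u, v) = f (u, w) := by
    intro u hu
    rw [hU] at hu
    exact hu
  choose! v w hvw hvN hwN hfvw using hUch
  have hUP : U ⊆ (↑P : Set Pt) := fun u hu => (hArcP (hNA (hvN u hu))).1
  have hUfin : U.Finite := P.finite_toSet.subset hUP
  set Q : Set (Pt × Pt) := (fun u => (u, w u)) '' U with hQ
  have hQN : Q ⊆ N := by
    rintro q ⟨u, hu, rfl⟩
    exact hwN u hu
  have hQcard : Q.ncard = U.ncard :=
    Set.ncard_image_of_injOn (fun a _ b _ h => congrArg Prod.fst h)
  -- removing `Q` from `N` does not change the image under `f`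
  have himg : f '' N = f '' (N \ Q) := by
    refine Set.Subset.antisymm ?_ (Set.image_mono (f := f) Set.diff_subset)
    rintro q ⟨p, hp, rfl⟩
    by_cases hpQ : p ∈ Q
    · obtain ⟨u, hu, rfl⟩ := hpQ
      refine ⟨(u, v u), ⟨hvN u hu, ?_⟩, hfvw u hu⟩
      rintro ⟨u', hu', huv⟩
      have h1 : u' = u := congrArg Prod.fst huv
      subst h1
      have h2 : w u' = v u' := congrArg Prod.snd huv
      exact hvw u' hu' h2.symm
    · exact ⟨p, ⟨hp, hpQ⟩, rfl⟩
  -- counting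
  have hNQ : (N \ Q).ncard + Q.ncard = N.ncard :=
    Set.ncard_diff_add_ncard_of_subset hQN hNfin
  have hfN1 : (f '' N).ncard ≤ (N \ Q).ncard := by
    rw [himg]
    exact Set.ncard_image_le (hNfin.subset Set.diff_subset)
  have hNAcard : N.ncard ≤ A.ncard := Set.ncard_le_ncard hNA hAfin
  set T : Set (Pt × Pt) := A \ f '' N with hT
  have hTfin : T.Finite := hAfin.subset Set.diff_subset
  have hTcard : T.ncard + (f '' N).ncard = A.ncard :=
    Set.ncard_diff_add_ncard_of_subset hfNA hAfin
  have hUT : U.ncard ≤ T.ncard := by omega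
  -- build an injection from `U` into `T`
  haveI : Fintype ↥U := hUfin.fintype
  haveI : Fintype ↥T := hTfin.fintype
  have hcards : Fintype.card ↥U ≤ Fintype.card ↥T := by
    have h1 : Fintype.card ↥U = U.ncard := by
      rw [← Nat.card_coe_set_eq, Nat.card_eq_fintype_card]
    have h2 : Fintype.card ↥T = T.ncard := by
      rw [← Nat.card_coe_set_eq, Nat.card_eq_fintype_card]
    omega
  obtain ⟨e⟩ : Nonempty (↥U ↪ ↥T) := Function.Embedding.nonempty_of_card_le hcards
  refine ⟨fun p => if h : p ∈ U then (e ⟨p, h⟩ : Pt × Pt) else ((0, 0), (0, 0)), ?_, ?_⟩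
  · intro a ha b hb hab
    simp only [dif_pos ha, dif_pos hb] at hab
    have h1 : e ⟨a, ha⟩ = e ⟨b, hb⟩ := Subtype.coe_injective hab
    have h2 := e.injective h1
    exact congrArg Subtype.val h2
  · intro u hu
    simp only [dif_pos hu]
    have hmem : (e ⟨u, hu⟩ : Pt × Pt) ∈ A \ f '' N := (e ⟨u, hu⟩).2
    exact ⟨hmem.1, hmem.2⟩
end

section
/- Let P be a finite set of at least 3 points in general position in the plane and let Π be a convex decomposition of P with no deletable edges. If u→v and u→w are two arcs of the directed graph →G(Π), then the edges uv and uw lie on the boundary of a common polygon of Π. -/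
open Set

namespace ArcsAux

/-- 2D cross product. -/
def kappa (a b : Pt) : ℝ := a.1 * b.2 - a.2 * b.1

lemma kappa_GP (a b c d : Pt) :
    kappa a b * kappa c d - kappa a c * kappa b d + kappa a d * kappa b c = 0 := by
  simp only [kappa]; ring

lemma kappa_anti (a b : Pt) : kappa a b = - kappa b a := by simp only [kappa]; ring

lemma kappa_sub_left (a b c : Pt) : kappa (a - b) c = kappa a c - kappa b c := by
  simp only [kappa, Prod.fst_sub, Prod.snd_sub]; ring

lemma kappa_smul_right (a : Pt) (t : ℝ) (b : Pt) : kappa a (t • b) = t * kappa a b := by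
  simp only [kappa, Prod.smul_fst, Prod.smul_snd, smul_eq_mul]; ring

/-- three vectors in the plane are linearly dependent. -/
lemma vec_identity (e1 e2 z : Pt) :
    (kappa e1 e2) • z = (kappa z e2) • e1 + (kappa e1 z) • e2 := by
  apply Prod.ext <;>
    simp only [kappa, Prod.smul_fst, Prod.smul_snd, Prod.fst_add, Prod.snd_add,
      smul_eq_mul] <;> ring

/-- a convex combination of three points lies in the convex hull. -/
lemma combo3_mem_convexHull {u v s : Pt} {a b c : ℝ} (ha : 0 ≤ a) (hb : 0 ≤ b)
    (hc : 0 ≤ c) (habc : a + b + c = 1) :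
    a • u + b • v + c • s ∈ convexHull ℝ ({u, v, s} : Set Pt) := by
  have hK : Convex ℝ (convexHull ℝ ({u, v, s} : Set Pt)) := convex_convexHull ℝ _
  have hu : u ∈ convexHull ℝ ({u, v, s} : Set Pt) :=
    subset_convexHull ℝ _ (by simp)
  have hv : v ∈ convexHull ℝ ({u, v, s} : Set Pt) :=
    subset_convexHull ℝ _ (by simp)
  have hs : s ∈ convexHull ℝ ({u, v, s} : Set Pt) :=
    subset_convexHull ℝ _ (by simp)
  by_cases hbc : b + c = 0
  · have hb0 : b = 0 := le_antisymm (by linarith) hb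
    have hc0 : c = 0 := le_antisymm (by linarith) hc
    have ha1 : a = 1 := by linarith
    simpa [hb0, hc0, ha1] using hu
  · have hbc' : 0 < b + c := lt_of_le_of_ne (by linarith) (Ne.symm hbc)
    have hm : (b / (b + c)) • v + (c / (b + c)) • s ∈ convexHull ℝ ({u, v, s} : Set Pt) :=
      hK hv hs (by positivity) (by positivity) (by field_simp)
    have := hK hu hm ha (le_of_lt hbc') (by linarith)
    have heq : a • u + (b + c) • ((b / (b + c)) • v + (c / (b + c)) • s)
        = a • u + b • v + c • s := by
      rw [smul_add, smul_smul, smul_smul]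
      rw [mul_div_cancel₀ _ hbc, mul_div_cancel₀ _ hbc]
      abel
    rwa [heq] at this

end ArcsAux
namespace ArcsAux

lemma kappa_zero_left (b : Pt) : kappa 0 b = 0 := by simp [kappa]

lemma continuous_kappa_sub (x e : Pt) : Continuous (fun y : Pt => kappa (y - x) e) := by
  simp only [kappa, Prod.fst_sub, Prod.snd_sub]
  fun_prop

lemma continuous_kappa_sub' (x e : Pt) : Continuous (fun y : Pt => kappa e (y - x)) := by
  simp only [kappa, Prod.fst_sub, Prod.snd_sub]
  fun_prop

/-- A point with positive barycentric coordinates w.r.t. a nondegenerate triangle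
lies in the interior of its convex hull. -/
lemma mem_int_triangle {u v s : Pt} (hD : kappa (v - u) (s - u) ≠ 0) {a b c : ℝ}
    (ha : 0 < a) (hb : 0 < b) (hc : 0 < c) (habc : a + b + c = 1) :
    a • u + b • v + c • s ∈ interior (convexHull ℝ ({u, v, s} : Set Pt)) := by
  set e1 := v - u with he1
  set e2 := s - u with he2
  set Dd := kappa e1 e2 with hDd
  set x := a • u + b • v + c • s with hx
  set B : Pt → ℝ := fun y => b + kappa (y - x) e2 * Dd⁻¹ with hB
  set C : Pt → ℝ := fun y => c + kappa e1 (y - x) * Dd⁻¹ with hC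
  set A : Pt → ℝ := fun y => 1 - B y - C y with hA
  have hBc : Continuous B := by
    apply continuous_const.add; exact (continuous_kappa_sub x e2).mul continuous_const
  have hCc : Continuous C := by
    apply continuous_const.add; exact (continuous_kappa_sub' x e1).mul continuous_const
  have hAc : Continuous A := by
    apply (continuous_const.sub hBc).sub hCc
  set U : Set Pt := {y | 0 < A y ∧ 0 < B y ∧ 0 < C y} with hU
  have hopen : IsOpen U := by
    apply IsOpen.inter (isOpen_lt continuous_const hAc)
    exact IsOpen.inter (isOpen_lt continuous_const hBc) (isOpen_lt continuous_const hCc)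
  have hxB : B x = b := by simp [hB, kappa_zero_left]
  have hxC : C x = c := by simp [hC, kappa]
  have hxU : x ∈ U := by
    refine ⟨?_, ?_, ?_⟩ <;> simp only [hA, hxB, hxC] <;> linarith
  have hsub : U ⊆ convexHull ℝ ({u, v, s} : Set Pt) := by
    intro y hy
    obtain ⟨hy1, hy2, hy3⟩ := hy
    have hrep : y = A y • u + B y • v + C y • s := by
      set z := y - x with hz
      set β := kappa z e2 * Dd⁻¹ with hβ
      set γ := kappa e1 z * Dd⁻¹ with hγ
      have hid : Dd • z = (kappa z e2) • e1 + (kappa e1 z) • e2 := vec_identity e1 e2 z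
      have hz' : β • e1 + γ • e2 = z := by
        have : β • e1 + γ • e2 = Dd⁻¹ • (Dd • z) := by
          rw [hid, hβ, hγ]
          rw [smul_add, smul_smul, smul_smul]
          rw [mul_comm (kappa z e2), mul_comm (kappa e1 z)]
        rw [this, smul_smul, inv_mul_cancel₀ hD, one_smul]
      have hBy : B y = b + β := rfl
      have hCy : C y = c + γ := rfl
      have hAy : A y = a - β - γ := by
        simp only [hA, hBy, hCy]; linarith
      rw [hAy, hBy, hCy]
      have : (a - β - γ) • u + (b + β) • v + (c + γ) • s
          = (a • u + b • v + c • s) + (β • (v - u) + γ • (s - u)) := by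
        module
      rw [this, ← he1, ← he2, hz', ← hx, hz]
      abel
    rw [hrep]
    apply combo3_mem_convexHull hy1.le hy2.le hy3.le
    simp only [hA]; ring
  exact mem_interior.mpr ⟨U, hsub, hopen, hxU⟩

end ArcsAux
namespace ArcsAux

lemma collinear_of_kappa {u v x : Pt} (hvu : v - u ≠ 0)
    (h : kappa (v - u) (x - u) = 0) : Collinear ℝ ({u, v, x} : Set Pt) := by
  rw [collinear_iff_exists_forall_eq_smul_vadd]
  refine ⟨u, v - u, ?_⟩
  have key : ∀ p : Pt, kappa (v - u) (p - u) = 0 → ∃ r : ℝ, p = r • (v - u) +ᵥ u := by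
    intro p hp
    simp only [kappa, Prod.fst_sub, Prod.snd_sub] at hp
    by_cases ha : v.1 - u.1 ≠ 0
    · refine ⟨(p.1 - u.1) / (v.1 - u.1), ?_⟩
      apply Prod.ext
      · simp only [Prod.fst_vadd, vadd_eq_add, Prod.fst_add, Prod.smul_fst, smul_eq_mul,
          Prod.fst_sub]
        field_simp
        ring
      · simp only [Prod.snd_vadd, vadd_eq_add, Prod.snd_add, Prod.smul_snd, smul_eq_mul,
          Prod.snd_sub]
        field_simp
        nlinarith [hp]
    · push_neg at ha
      have hb : v.2 - u.2 ≠ 0 := by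
        intro hb
        apply hvu
        apply Prod.ext <;>
          simp only [Prod.fst_sub, Prod.snd_sub, Prod.fst_zero, Prod.snd_zero] <;> linarith
      have hc : p.1 - u.1 = 0 := by
        rw [ha] at hp
        have : (v.2 - u.2) * (p.1 - u.1) = 0 := by linarith
        rcases mul_eq_zero.mp this with h' | h'
        · exact absurd h' hb
        · exact h'
      refine ⟨(p.2 - u.2) / (v.2 - u.2), ?_⟩
      apply Prod.ext
      · simp only [Prod.fst_vadd, vadd_eq_add, Prod.fst_add, Prod.smul_fst, smul_eq_mul,
          Prod.fst_sub, ha, mul_zero]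
        linarith
      · simp only [Prod.snd_vadd, vadd_eq_add, Prod.snd_add, Prod.smul_snd, smul_eq_mul,
          Prod.snd_sub]
        field_simp
        ring
  intro p hp
  rcases hp with rfl | rfl | rfl
  · exact ⟨0, by simp⟩
  · exact ⟨1, by simp⟩
  · exact key _ h

/-- In general position, the cross product of difference vectors of three
distinct points is nonzero. -/
lemma kappa_ne_zero {P : Finset Pt} (hgp : GenPos P) {p q r : Pt}
    (hp : p ∈ P) (hq : q ∈ P) (hr : r ∈ P) (hpq : p ≠ q) (hqr : q ≠ r) (hpr : p ≠ r) :
    kappa (q - p) (r - p) ≠ 0 := by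
  intro h
  exact hgp p hp q hq r hr hpq hqr hpr (collinear_of_kappa (sub_ne_zero.mpr hpq.symm) h)

/-- A closed half-plane is convex. -/
lemma convex_halfplane (q u : Pt) : Convex ℝ {y : Pt | kappa q (y - u) ≤ 0} := by
  intro y1 h1 y2 h2 a b ha hb hab
  simp only [Set.mem_setOf_eq, kappa, Prod.fst_sub, Prod.snd_sub, Prod.fst_add, Prod.snd_add,
    Prod.smul_fst, Prod.smul_snd, smul_eq_mul] at *
  have key : q.1 * (a * y1.2 + b * y2.2 - u.2) - q.2 * (a * y1.1 + b * y2.1 - u.1)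
      = a * (q.1 * (y1.2 - u.2) - q.2 * (y1.1 - u.1))
        + b * (q.1 * (y2.2 - u.2) - q.2 * (y2.1 - u.1)) := by
    have hb' : b = 1 - a := by linarith
    rw [hb']; ring
  rw [key]
  have := mul_nonpos_of_nonneg_of_nonpos ha h1
  have := mul_nonpos_of_nonneg_of_nonpos hb h2
  linarith

/-- If a set lies in a closed half-plane through `u`, then `u` is not in its interior. -/
lemma not_mem_interior_of_halfplane {K : Set Pt} {q u d0 : Pt}
    (hK : K ⊆ {y : Pt | kappa q (y - u) ≤ 0}) (hd : 0 < kappa q d0) :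
    u ∉ interior K := by
  intro hu
  rw [mem_interior_iff_mem_nhds, Metric.mem_nhds_iff] at hu
  obtain ⟨ε, hε, hball⟩ := hu
  set δ : ℝ := ε / (2 * (‖d0‖ + 1)) with hδ
  have hd0 : (0:ℝ) < ‖d0‖ + 1 := by positivity
  have hδpos : 0 < δ := by positivity
  have hmem : u + δ • d0 ∈ K := by
    apply hball
    rw [Metric.mem_ball, dist_eq_norm, add_sub_cancel_left, norm_smul, Real.norm_eq_abs,
      abs_of_pos hδpos]
    calc δ * ‖d0‖ ≤ δ * (‖d0‖ + 1) := by nlinarith [norm_nonneg d0]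
      _ = ε / 2 := by rw [hδ]; field_simp
      _ < ε := by linarith
  have h2 := hK hmem
  simp only [Set.mem_setOf_eq, add_sub_cancel_left, kappa_smul_right] at h2
  nlinarith

end ArcsAux
namespace ArcsAux

lemma exists_third {S : Finset Pt} (h3 : 3 ≤ S.card) (u v : Pt) :
    ∃ s ∈ S, s ≠ u ∧ s ≠ v := by
  have h1 : S.card - 1 ≤ (S.erase u).card := Finset.pred_card_le_card_erase
  have h2 : (S.erase u).card - 1 ≤ ((S.erase u).erase v).card := Finset.pred_card_le_card_erase
  have : 0 < ((S.erase u).erase v).card := by omega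
  obtain ⟨s, hs⟩ := Finset.card_pos.mp this
  rw [Finset.mem_erase] at hs
  obtain ⟨hsv, hs'⟩ := hs
  rw [Finset.mem_erase] at hs'
  exact ⟨s, hs'.2, hs'.1, hsv⟩

lemma exists_three {S : Finset Pt} (h3 : 3 ≤ S.card) :
    ∃ a ∈ S, ∃ b ∈ S, ∃ c ∈ S, a ≠ b ∧ a ≠ c ∧ b ≠ c := by
  have h0 : 0 < S.card := by omega
  obtain ⟨a, ha⟩ := Finset.card_pos.mp h0
  obtain ⟨b, hb, hba, _⟩ := exists_third h3 a a
  obtain ⟨c, hc, hca, hcb⟩ := exists_third h3 a b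
  exact ⟨a, ha, b, hb, c, hc, hba.symm, hca.symm, hcb.symm⟩

lemma interior_hull_nonempty {P S : Finset Pt} (hgp : GenPos P) (hSP : S ⊆ P)
    (h3 : 3 ≤ S.card) : (interior (convexHull ℝ (S : Set Pt))).Nonempty := by
  obtain ⟨a, ha, b, hb, c, hc, hab, hac, hbc⟩ := exists_three h3
  have hk : kappa (b - a) (c - a) ≠ 0 :=
    kappa_ne_zero hgp (hSP ha) (hSP hb) (hSP hc) hab hbc hac
  have hmem := mem_int_triangle hk (by norm_num : (0:ℝ) < 1/3) (by norm_num : (0:ℝ) < 1/3)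
    (by norm_num : (0:ℝ) < 1/3) (by norm_num)
  refine ⟨_, interior_mono (convexHull_mono ?_) hmem⟩
  intro x hx
  rcases hx with rfl | rfl | rfl <;> simpa

/-- If two convex hulls have disjoint interiors and the first has nonempty interior,
then the first hull does not meet the interior of the second. -/
lemma hull_not_meet_interior {S T : Finset Pt}
    (hne : (interior (convexHull ℝ (S : Set Pt))).Nonempty)
    (hdisj : interior (convexHull ℝ (S : Set Pt)) ∩ interior (convexHull ℝ (T : Set Pt)) = ∅)
    {z : Pt} (hz1 : z ∈ convexHull ℝ (S : Set Pt))
    (hz2 : z ∈ interior (convexHull ℝ (T : Set Pt))) : False := by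
  obtain ⟨y, hy⟩ := hne
  have hopen : IsOpen (interior (convexHull ℝ (T : Set Pt))) := isOpen_interior
  obtain ⟨ε, hε, hball⟩ := Metric.isOpen_iff.mp hopen z hz2
  set t : ℝ := min (1/2) (ε / (2 * (‖y - z‖ + 1))) with ht
  have hden : (0:ℝ) < ‖y - z‖ + 1 := by positivity
  have htpos : 0 < t := by
    apply lt_min (by norm_num)
    positivity
  have ht1 : t ≤ 1/2 := min_le_left _ _
  set zt : Pt := t • y + (1 - t) • z with hzt
  have hztS : zt ∈ interior (convexHull ℝ (S : Set Pt)) :=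
    (convex_convexHull ℝ _).combo_interior_closure_mem_interior hy
      (subset_closure hz1) htpos (by linarith) (by ring)
  have hztT : zt ∈ interior (convexHull ℝ (T : Set Pt)) := by
    apply hball
    have : zt - z = t • (y - z) := by rw [hzt]; module
    rw [Metric.mem_ball, dist_eq_norm, this, norm_smul, Real.norm_eq_abs, abs_of_pos htpos]
    have h2 : t ≤ ε / (2 * (‖y - z‖ + 1)) := min_le_right _ _
    calc t * ‖y - z‖ ≤ (ε / (2 * (‖y - z‖ + 1))) * ‖y - z‖ := by
          apply mul_le_mul_of_nonneg_right h2 (norm_nonneg _)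
      _ ≤ (ε / (2 * (‖y - z‖ + 1))) * (‖y - z‖ + 1) := by
          apply mul_le_mul_of_nonneg_left (by linarith) (by positivity)
      _ = ε / 2 := by field_simp
      _ < ε := by linarith
  have : zt ∈ (∅ : Set Pt) := hdisj ▸ ⟨hztS, hztT⟩
  exact this.elim

end ArcsAux
namespace ArcsAux

lemma kappa_self (a : Pt) : kappa a a = 0 := by simp [kappa]; ring

/-- Two triangles over a common base `uv`, with apexes on the same side,
have a common interior point. -/
lemma common_interior_point {u v s t : Pt}
    (hs : kappa (v - u) (s - u) ≠ 0) (ht : kappa (v - u) (t - u) ≠ 0)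
    (hsame : 0 < kappa (v - u) (s - u) * kappa (v - u) (t - u)) :
    ∃ q : Pt, q ∈ interior (convexHull ℝ ({u, v, s} : Set Pt)) ∧
      q ∈ interior (convexHull ℝ ({u, v, t} : Set Pt)) := by
  set e1 := v - u with he1
  set e2 := t - u with he2
  set Dt := kappa e1 e2 with hDt
  set p : ℝ := kappa (s - u) e2 / Dt with hp
  set q' : ℝ := kappa e1 (s - u) / Dt with hq'
  have hq'pos : 0 < q' := by
    have h1 : q' = (kappa e1 (s - u) * Dt) / (Dt ^ 2) := by
      rw [hq']; field_simp
    rw [h1]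
    apply div_pos hsame (by positivity)
  have hdecomp : s - u = p • e1 + q' • e2 := by
    have hid := vec_identity e1 e2 (s - u)
    have : p • e1 + q' • e2 = Dt⁻¹ • (Dt • (s - u)) := by
      rw [hid, hp, hq', smul_add, smul_smul, smul_smul]
      congr 1 <;> rw [div_eq_mul_inv] <;> ring_nf
    rw [this, smul_smul, inv_mul_cancel₀ ht, one_smul]
  set K : ℝ := |p| + |q'| + 1 with hK
  have hKpos : (0:ℝ) < K := by positivity
  set δ : ℝ := 1 / (4 * K) with hδ
  have hδpos : 0 < δ := by positivity
  have hδK : δ * K = 1/4 := by rw [hδ]; field_simp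
  have hδle : δ ≤ 1/4 := by nlinarith [le_abs_self p, abs_nonneg p, abs_nonneg q']
  refine ⟨(1/2*(1-δ)) • u + (1/2*(1-δ)) • v + δ • s, ?_, ?_⟩
  · exact mem_int_triangle hs (by nlinarith) (by nlinarith) hδpos (by ring)
  · have hA : 0 < 1/2*(1-δ) + δ*(1 - p - q') := by
      nlinarith [le_abs_self p, neg_abs_le p, le_abs_self q', neg_abs_le q']
    have hB : 0 < 1/2*(1-δ) + δ*p := by
      nlinarith [le_abs_self p, neg_abs_le p, abs_nonneg q']
    have hC : 0 < δ * q' := mul_pos hδpos hq'pos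
    have hmem := mem_int_triangle ht hA hB hC (by ring)
    have heq : (1/2*(1-δ) + δ*(1 - p - q')) • u + (1/2*(1-δ) + δ*p) • v + (δ * q') • t
        = (1/2*(1-δ)) • u + (1/2*(1-δ)) • v + δ • s := by
      have hs' : s = u + p • e1 + q' • e2 := by
        have := hdecomp
        rw [he1, he2] at this ⊢
        have h2 : s = u + (s - u) := by abel
        rw [h2, this]
        abel
      rw [hs', he1, he2]
      module
    rwa [heq] at hmem

/-- All vertices of a polygon other than the endpoints of a side lie strictly
on one side of the line spanned by the side. -/
lemma side_sign {S : Finset Pt} {u v : Pt} (hside : IsSideOf S u v) (h3 : 3 ≤ S.card) :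
    (∀ x ∈ S, x ≠ u → x ≠ v → kappa (v - u) (x - u) < 0) ∨
    (∀ x ∈ S, x ≠ u → x ≠ v → 0 < kappa (v - u) (x - u)) := by
  obtain ⟨huS, hvS, huv, l, c, hlu, hlv, hlt⟩ := hside
  set dv : Pt := v - u with hdv
  have hdvne : dv ≠ 0 := sub_ne_zero.mpr huv.symm
  set n : Pt := (-dv.2, dv.1) with hn
  set K : ℝ := dv.1^2 + dv.2^2 with hK2
  have hKpos : 0 < K := by
    rcases Prod.mk.injEq dv.1 dv.2 0 0 ▸ (by exact fun h => hdvne (by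
      apply Prod.ext <;> simp [h.1, h.2]) : dv.1 = 0 ∧ dv.2 = 0 → False) with h
    by_contra hc
    push_neg at hc
    have h1 : dv.1 = 0 := by nlinarith [sq_nonneg dv.1, sq_nonneg dv.2]
    have h2 : dv.2 = 0 := by nlinarith [sq_nonneg dv.1, sq_nonneg dv.2]
    exact hdvne (by apply Prod.ext <;> simp [h1, h2])
  have hldv : l dv = 0 := by
    rw [hdv, map_sub, hlu, hlv, sub_self]
  have hrep : ∀ d : Pt, l d * K = kappa dv d * l n := by
    intro d
    have hd : K • d = (d.1*dv.1 + d.2*dv.2) • dv + (kappa dv d) • n := by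
      apply Prod.ext <;>
        simp only [kappa, hn, Prod.smul_fst, Prod.smul_snd, Prod.fst_add, Prod.snd_add,
          smul_eq_mul] <;> ring
    have h1 : l (K • d) = K * l d := by rw [map_smul, smul_eq_mul]
    have h2 : l ((d.1*dv.1 + d.2*dv.2) • dv + (kappa dv d) • n)
        = (d.1*dv.1 + d.2*dv.2) * l dv + kappa dv d * l n := by
      rw [map_add, map_smul, map_smul, smul_eq_mul, smul_eq_mul]
    rw [hd, h2, hldv] at h1
    linarith
  have hxlt : ∀ x ∈ S, x ≠ u → x ≠ v → l (x - u) < 0 := by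
    intro x hx hxu hxv
    have := hlt x hx hxu hxv
    rw [map_sub, hlu]
    linarith
  by_cases hσ : l n = 0
  · exfalso
    obtain ⟨s, hsS, hsu, hsv⟩ := exists_third h3 u v
    have h1 := hrep (s - u)
    rw [hσ, mul_zero] at h1
    have h2 : l (s - u) = 0 := by
      rcases mul_eq_zero.mp h1 with h' | h'
      · exact h'
      · exact absurd h' (ne_of_gt hKpos)
    linarith [hxlt s hsS hsu hsv]
  · rcases lt_or_gt_of_ne hσ with hσneg | hσpos
    · right
      intro x hx hxu hxv
      have h1 := hrep (x - u)
      have h2 := hxlt x hx hxu hxv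
      nlinarith
    · left
      intro x hx hxu hxv
      have h1 := hrep (x - u)
      have h2 := hxlt x hx hxu hxv
      nlinarith

/-- Among finitely many directions in the open lower half-plane of `e`, there is
a clockwise-most one. -/
lemma ext_min (u e : Pt) (X : Finset Pt) (hne : X.Nonempty)
    (hX : ∀ x ∈ X, kappa e (x - u) < 0) :
    ∃ g ∈ X, ∀ x ∈ X, 0 ≤ kappa (g - u) (x - u) := by
  classical
  induction X using Finset.induction_on with
  | empty => exact absurd hne (by simp)
  | @insert a X haX ih =>
    by_cases hXe : X.Nonempty
    · obtain ⟨g, hgX, hg⟩ := ih hXe (fun x hx => hX x (Finset.mem_insert_of_mem hx))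
      have hea := hX a (Finset.mem_insert_self _ _)
      have heg := hX g (Finset.mem_insert_of_mem hgX)
      by_cases hag : 0 ≤ kappa (g - u) (a - u)
      · refine ⟨g, Finset.mem_insert_of_mem hgX, ?_⟩
        intro x hx
        rcases Finset.mem_insert.mp hx with rfl | hx
        · exact hag
        · exact hg x hx
      · push_neg at hag
        have hag' : 0 < kappa (a - u) (g - u) := by
          rw [kappa_anti]; linarith
        refine ⟨a, Finset.mem_insert_self _ _, ?_⟩
        intro x hx
        rcases Finset.mem_insert.mp hx with rfl | hx
        · rw [kappa_self]
        · have hgx := hg x hx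
          have hex := hX x (Finset.mem_insert_of_mem hx)
          have hGP := kappa_GP e (a - u) (g - u) (x - u)
          nlinarith [mul_nonpos_of_nonpos_of_nonneg hea.le hgx,
            mul_neg_of_neg_of_pos hex hag']
    · rw [Finset.not_nonempty_iff_eq_empty] at hXe
      subst hXe
      refine ⟨a, Finset.mem_insert_self _ _, ?_⟩
      intro x hx
      rcases Finset.mem_insert.mp hx with rfl | hx
      · rw [kappa_self]
      · exact absurd hx (by simp)

/-- Among finitely many directions in the open upper half-plane of `e`, there is
a counterclockwise-most one. -/
lemma ext_max (u e : Pt) (X : Finset Pt) (hne : X.Nonempty)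
    (hX : ∀ x ∈ X, 0 < kappa e (x - u)) :
    ∃ g ∈ X, ∀ x ∈ X, kappa (g - u) (x - u) ≤ 0 := by
  classical
  induction X using Finset.induction_on with
  | empty => exact absurd hne (by simp)
  | @insert a X haX ih =>
    by_cases hXe : X.Nonempty
    · obtain ⟨g, hgX, hg⟩ := ih hXe (fun x hx => hX x (Finset.mem_insert_of_mem hx))
      have hea := hX a (Finset.mem_insert_self _ _)
      have heg := hX g (Finset.mem_insert_of_mem hgX)
      by_cases hag : kappa (g - u) (a - u) ≤ 0
      · refine ⟨g, Finset.mem_insert_of_mem hgX, ?_⟩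
        intro x hx
        rcases Finset.mem_insert.mp hx with rfl | hx
        · exact hag
        · exact hg x hx
      · push_neg at hag
        have hag' : kappa (a - u) (g - u) < 0 := by
          rw [kappa_anti]; linarith
        refine ⟨a, Finset.mem_insert_self _ _, ?_⟩
        intro x hx
        rcases Finset.mem_insert.mp hx with rfl | hx
        · rw [kappa_self]
        · have hgx := hg x hx
          have hex := hX x (Finset.mem_insert_of_mem hx)
          have hGP := kappa_GP e (a - u) (g - u) (x - u)
          nlinarith [mul_nonpos_of_nonneg_of_nonpos hea.le hgx,
            mul_neg_of_pos_of_neg hex hag']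
    · rw [Finset.not_nonempty_iff_eq_empty] at hXe
      subst hXe
      refine ⟨a, Finset.mem_insert_self _ _, ?_⟩
      intro x hx
      rcases Finset.mem_insert.mp hx with rfl | hx
      · rw [kappa_self]
      · exact absurd hx (by simp)

end ArcsAux
namespace ArcsAux

lemma kappa_zero_right (a : Pt) : kappa a 0 = 0 := by simp [kappa]

/-- Decomposition of a vector in the basis given by two independent vectors. -/
lemma vec_decomp {e1 e2 d : Pt} (h : kappa e1 e2 ≠ 0) :
    d = (kappa d e2 / kappa e1 e2) • e1 + (kappa e1 d / kappa e1 e2) • e2 := by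
  have hid := vec_identity e1 e2 d
  have h2 : (kappa d e2 / kappa e1 e2) • e1 + (kappa e1 d / kappa e1 e2) • e2
      = (kappa e1 e2)⁻¹ • ((kappa d e2) • e1 + (kappa e1 d) • e2) := by
    rw [smul_add, smul_smul, smul_smul]
    congr 1 <;> rw [div_eq_mul_inv] <;> ring_nf
  rw [h2, ← hid, smul_smul, inv_mul_cancel₀ h, one_smul]

lemma key (P : Finset Pt) (hgp : GenPos P) (D : Finset (Finset Pt)) (hD : IsConvexDecomp P D)
    (u v w : Pt) (hvw : v ≠ w)
    (S1 T1 S2 T2 : Finset Pt) (hS1 : S1 ∈ D) (hT1 : T1 ∈ D) (hS2 : S2 ∈ D) (hT2 : T2 ∈ D)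
    (hS1T1 : S1 ≠ T1) (hS1S2 : S1 ≠ S2) (hS1T2 : S1 ≠ T2) (hT1S2 : T1 ≠ S2) (hT1T2 : T1 ≠ T2)
    (sS1 : IsSideOf S1 u v) (sT1 : IsSideOf T1 u v) (sS2 : IsSideOf S2 u w) (sT2 : IsSideOf T2 u w)
    (hneg : ∀ x ∈ S1, x ≠ u → x ≠ v → kappa (v - u) (x - u) < 0)
    (hpos : ∀ x ∈ T1, x ≠ u → x ≠ v → 0 < kappa (v - u) (x - u))
    (hrefl1 : u ∈ interior (convexHull ℝ ((S1 ∪ T1 : Finset Pt) : Set Pt)))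
    (hrefl2 : u ∈ interior (convexHull ℝ ((S2 ∪ T2 : Finset Pt) : Set Pt))) : False := by
  classical
  obtain ⟨hpoly, hdisj, -, -⟩ := hD
  obtain ⟨huS1, hvS1, huv, -⟩ := sS1
  obtain ⟨huT1, hvT1, -, -⟩ := sT1
  obtain ⟨huS2, hwS2, huw, -⟩ := sS2
  obtain ⟨huT2, hwT2, -, -⟩ := sT2
  have hS1P : (S1 : Set Pt) ⊆ P := by exact_mod_cast (hpoly S1 hS1).1
  have hT1P : (T1 : Set Pt) ⊆ P := by exact_mod_cast (hpoly T1 hT1).1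
  have hS2P : (S2 : Set Pt) ⊆ P := by exact_mod_cast (hpoly S2 hS2).1
  have hT2P : (T2 : Set Pt) ⊆ P := by exact_mod_cast (hpoly T2 hT2).1
  have hS1c : 3 ≤ S1.card := (hpoly S1 hS1).2.1
  have hT1c : 3 ≤ T1.card := (hpoly T1 hT1).2.1
  have hS2c : 3 ≤ S2.card := (hpoly S2 hS2).2.1
  have hT2c : 3 ≤ T2.card := (hpoly T2 hT2).2.1
  have huP : u ∈ P := hS1P huS1
  have hvP : v ∈ P := hS1P hvS1
  have hwP : w ∈ P := hS2P hwS2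
  -- extremal vertices of S1 and T1 at u
  set X1 : Finset Pt := (S1.erase v).erase u with hX1
  have hX1mem : ∀ x ∈ X1, x ∈ S1 ∧ x ≠ u ∧ x ≠ v := by
    intro x hx
    rw [hX1, Finset.mem_erase, Finset.mem_erase] at hx
    exact ⟨hx.2.2, hx.1, hx.2.1⟩
  have hX1ne : X1.Nonempty := by
    apply Finset.card_pos.mp
    have h1 : S1.card - 1 ≤ (S1.erase v).card := Finset.pred_card_le_card_erase
    have h2 : (S1.erase v).card - 1 ≤ ((S1.erase v).erase u).card :=
      Finset.pred_card_le_card_erase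
    rw [hX1]; omega
  obtain ⟨s1, hs1X, hs1ext⟩ := ext_min u (v - u) X1 hX1ne
    (fun x hx => hneg x (hX1mem x hx).1 (hX1mem x hx).2.1 (hX1mem x hx).2.2)
  obtain ⟨hs1S1, hs1u, hs1v⟩ := hX1mem s1 hs1X
  set X2 : Finset Pt := (T1.erase v).erase u with hX2
  have hX2mem : ∀ x ∈ X2, x ∈ T1 ∧ x ≠ u ∧ x ≠ v := by
    intro x hx
    rw [hX2, Finset.mem_erase, Finset.mem_erase] at hx
    exact ⟨hx.2.2, hx.1, hx.2.1⟩
  have hX2ne : X2.Nonempty := by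
    apply Finset.card_pos.mp
    have h1 : T1.card - 1 ≤ (T1.erase v).card := Finset.pred_card_le_card_erase
    have h2 : (T1.erase v).card - 1 ≤ ((T1.erase v).erase u).card :=
      Finset.pred_card_le_card_erase
    rw [hX2]; omega
  obtain ⟨t1, ht1X, ht1ext⟩ := ext_max u (v - u) X2 hX2ne
    (fun x hx => hpos x (hX2mem x hx).1 (hX2mem x hx).2.1 (hX2mem x hx).2.2)
  obtain ⟨ht1T1, ht1u, ht1v⟩ := hX2mem t1 ht1X
  have hP0 : kappa (v - u) (s1 - u) < 0 := hneg s1 hs1S1 hs1u hs1v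
  have hQ0 : 0 < kappa (v - u) (t1 - u) := hpos t1 ht1T1 ht1u ht1v
  have hs1t1 : s1 ≠ t1 := by
    intro h; rw [h] at hP0; linarith
  have hs1P : s1 ∈ P := hS1P hs1S1
  have ht1P : t1 ∈ P := hT1P ht1T1
  have hRne : kappa (s1 - u) (t1 - u) ≠ 0 :=
    kappa_ne_zero hgp huP hs1P ht1P (Ne.symm hs1u) hs1t1 (Ne.symm ht1u)
  -- bounds for all vertices of S1 and T1
  have hS1b : ∀ x ∈ S1, kappa (v - u) (x - u) ≤ 0 ∧ 0 ≤ kappa (s1 - u) (x - u) := by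
    intro x hx
    by_cases hxu : x = u
    · subst hxu; rw [sub_self, kappa_zero_right, kappa_zero_right]; exact ⟨le_refl _, le_refl _⟩
    by_cases hxv : x = v
    · subst hxv
      constructor
      · rw [kappa_self]
      · rw [kappa_anti]; linarith
    · refine ⟨(hneg x hx hxu hxv).le, ?_⟩
      apply hs1ext
      rw [hX1, Finset.mem_erase, Finset.mem_erase]
      exact ⟨hxu, hxv, hx⟩
  have hT1b : ∀ x ∈ T1, 0 ≤ kappa (v - u) (x - u) ∧ kappa (t1 - u) (x - u) ≤ 0 := by
    intro x hx
    by_cases hxu : x = u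
    · subst hxu; rw [sub_self, kappa_zero_right, kappa_zero_right]; exact ⟨le_refl _, le_refl _⟩
    by_cases hxv : x = v
    · subst hxv
      constructor
      · rw [kappa_self]
      · rw [kappa_anti]; linarith
    · refine ⟨(hpos x hx hxu hxv).le, ?_⟩
      apply ht1ext
      rw [hX2, Finset.mem_erase, Finset.mem_erase]
      exact ⟨hxu, hxv, hx⟩
  -- the reflex condition forces the angular gap to be less than π : R < 0
  have hR : kappa (s1 - u) (t1 - u) < 0 := by
    rcases lt_or_gt_of_ne hRne with h | h
    · exact h
    exfalso
    have hsub : convexHull ℝ ((S1 ∪ T1 : Finset Pt) : Set Pt)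
        ⊆ {y : Pt | kappa ((t1 - u) - (s1 - u)) (y - u) ≤ 0} := by
      apply convexHull_min _ (convex_halfplane _ _)
      rw [Finset.coe_union]
      rintro x (hx | hx)
      · obtain ⟨hA, hB⟩ := hS1b x hx
        have hGP := kappa_GP (v - u) (s1 - u) (t1 - u) (x - u)
        have hC : kappa (t1 - u) (x - u) ≤ 0 := by
          nlinarith [mul_nonneg hQ0.le hB, mul_nonpos_of_nonpos_of_nonneg hA h.le]
        rw [Set.mem_setOf_eq, kappa_sub_left]
        linarith
      · obtain ⟨hA, hC⟩ := hT1b x hx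
        have hGP := kappa_GP (v - u) (s1 - u) (t1 - u) (x - u)
        have hB : 0 ≤ kappa (s1 - u) (x - u) := by
          nlinarith [mul_nonpos_of_nonpos_of_nonneg (le_of_lt hP0) (le_of_lt h),
            mul_nonneg hA h.le, mul_nonpos_of_nonpos_of_nonneg hC hA]
        rw [Set.mem_setOf_eq, kappa_sub_left]
        linarith
    refine not_mem_interior_of_halfplane (d0 := u - v) hsub ?_ hrefl1
    have heq : kappa ((t1 - u) - (s1 - u)) (u - v)
        = kappa (v - u) (t1 - u) - kappa (v - u) (s1 - u) := by
      simp only [kappa, Prod.fst_sub, Prod.snd_sub]; ring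
    rw [heq]
    linarith
  -- v is not a vertex of S2 or T2
  have hvnot : ∀ E : Finset Pt, E ∈ D → S1 ≠ E → T1 ≠ E → u ∈ E → w ∈ E → v ∉ E := by
    intro E hE hS1E hT1E huE hwE hvE
    have hEP : (E : Set Pt) ⊆ P := by exact_mod_cast (hpoly E hE).1
    have hwk : kappa (v - u) (w - u) ≠ 0 :=
      kappa_ne_zero hgp huP hvP hwP huv hvw huw
    rcases lt_or_gt_of_ne hwk with hneg' | hpos'
    · obtain ⟨q, hq1, hq2⟩ := common_interior_point (ne_of_lt hP0) hwk
        (mul_pos_of_neg_of_neg hP0 hneg')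
      have hq1' : q ∈ interior (convexHull ℝ (S1 : Set Pt)) := by
        apply interior_mono (convexHull_mono _) hq1
        intro y hy
        rcases hy with rfl | rfl | rfl
        · exact huS1
        · exact hvS1
        · exact hs1S1
      have hq2' : q ∈ interior (convexHull ℝ (E : Set Pt)) := by
        apply interior_mono (convexHull_mono _) hq2
        intro y hy
        rcases hy with rfl | rfl | rfl
        · exact huE
        · exact hvE
        · exact hwE
      have hmem : q ∈ interior (convexHull ℝ (S1 : Set Pt))
          ∩ interior (convexHull ℝ (E : Set Pt)) := ⟨hq1', hq2'⟩
      rw [hdisj S1 hS1 E hE hS1E] at hmem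
      exact hmem
    · obtain ⟨q, hq1, hq2⟩ := common_interior_point (ne_of_gt hQ0) hwk
        (mul_pos hQ0 hpos')
      have hq1' : q ∈ interior (convexHull ℝ (T1 : Set Pt)) := by
        apply interior_mono (convexHull_mono _) hq1
        intro y hy
        rcases hy with rfl | rfl | rfl
        · exact huT1
        · exact hvT1
        · exact ht1T1
      have hq2' : q ∈ interior (convexHull ℝ (E : Set Pt)) := by
        apply interior_mono (convexHull_mono _) hq2
        intro y hy
        rcases hy with rfl | rfl | rfl
        · exact huE
        · exact hvE
        · exact hwE
      have hmem : q ∈ interior (convexHull ℝ (T1 : Set Pt))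
          ∩ interior (convexHull ℝ (E : Set Pt)) := ⟨hq1', hq2'⟩
      rw [hdisj T1 hT1 E hE hT1E] at hmem
      exact hmem
  -- the main per-vertex bound : every vertex of S2 ∪ T2 lies in the gap half-plane
  have hbound : ∀ E : Finset Pt, E ∈ D → S1 ≠ E → T1 ≠ E → u ∈ E → w ∈ E →
      ∀ x ∈ E, kappa ((s1 - u) - (t1 - u)) (x - u) ≤ 0 := by
    intro E hE hS1E hT1E huE hwE x hxE
    have hEP : (E : Set Pt) ⊆ P := by exact_mod_cast (hpoly E hE).1
    have hEc : 3 ≤ E.card := (hpoly E hE).2.1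
    by_cases hxu : x = u
    · subst hxu; rw [sub_self, kappa_zero_right]
    have hxP : x ∈ P := hEP hxE
    -- helper : the segment (u, x] cannot enter the interior of S1 or T1
    have hseg : ∀ (F : Finset Pt), F ∈ D → F ≠ E → ∀ t : ℝ, 0 ≤ t → t ≤ 1 →
        (1 - t) • u + t • x ∈ interior (convexHull ℝ (F : Set Pt)) → False := by
      intro F hF hFE t ht0 ht1' hmem
      have hz1 : (1 - t) • u + t • x ∈ convexHull ℝ (E : Set Pt) :=
        (convex_convexHull ℝ (E : Set Pt)) (subset_convexHull ℝ _ huE)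
          (subset_convexHull ℝ _ hxE) (by linarith) ht0 (by ring)
      exact hull_not_meet_interior (interior_hull_nonempty hgp hEP hEc)
        (hdisj E hE F hF (fun h => hFE h.symm)) hz1 hmem
    rcases lt_trichotomy (kappa (v - u) (x - u)) 0 with hA | hA | hA
    · -- x on the S1 side : show it is clockwise of s1
      have hB : kappa (s1 - u) (x - u) ≤ 0 := by
        by_contra hB
        push_neg at hB
        -- the direction of x enters the interior of the wedge of S1
        have hP0ne : kappa (v - u) (s1 - u) ≠ 0 := ne_of_lt hP0
        have hdec := vec_decomp (d := x - u) hP0ne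
        set α : ℝ := kappa (x - u) (s1 - u) / kappa (v - u) (s1 - u) with hα
        set β : ℝ := kappa (v - u) (x - u) / kappa (v - u) (s1 - u) with hβ
        have hαpos : 0 < α := by
          rw [hα, kappa_anti]
          apply div_pos_of_neg_of_neg _ hP0
          linarith
        have hβpos : 0 < β := div_pos_of_neg_of_neg hA hP0
        set t : ℝ := 1 / (α + β + 1) with htdef
        have htpos : 0 < t := by rw [htdef]; positivity
        have ht1' : t ≤ 1 := by
          rw [htdef]
          rw [div_le_one (by positivity)]
          linarith
        have hcoef : 1 - t * α - t * β = t := by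
          rw [htdef]; field_simp; ring
        have hmem : (1 - t*α - t*β) • u + (t*α) • v + (t*β) • s1
            ∈ interior (convexHull ℝ ({u, v, s1} : Set Pt)) := by
          apply mem_int_triangle hP0ne (by rw [hcoef]; exact htpos)
            (mul_pos htpos hαpos) (mul_pos htpos hβpos) (by ring)
        have heq : (1 - t*α - t*β) • u + (t*α) • v + (t*β) • s1 = (1 - t) • u + t • x := by
          have hx' : x = u + α • (v - u) + β • (s1 - u) := by
            nth_rewrite 1 [show x = u + (x - u) by abel]
            rw [hdec]
            abel
          rw [hx']
          module
        rw [heq] at hmem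
        have hmem' : (1 - t) • u + t • x ∈ interior (convexHull ℝ (S1 : Set Pt)) := by
          apply interior_mono (convexHull_mono _) hmem
          intro y hy
          rcases hy with rfl | rfl | rfl
          · exact huS1
          · exact hvS1
          · exact hs1S1
        exact hseg S1 hS1 (by exact hS1E) t htpos.le ht1' hmem'
      -- deduce the t1 bound
      have hGP := kappa_GP (v - u) (s1 - u) (t1 - u) (x - u)
      have hC : 0 < kappa (t1 - u) (x - u) := by
        nlinarith [mul_nonpos_of_nonneg_of_nonpos hQ0.le hB,
          mul_pos_of_neg_of_neg hA hR]
      rw [kappa_sub_left]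
      linarith
    · -- x collinear with u, v : then x = v, impossible
      exfalso
      by_cases hxv : x = v
      · subst hxv
        exact hvnot E hE hS1E hT1E huE hwE hxE
      · exact kappa_ne_zero hgp huP hvP hxP huv
          (fun h => hxv h.symm) (fun h => hxu h.symm) hA
    · -- x on the T1 side : show it is counterclockwise of t1
      have hC : 0 ≤ kappa (t1 - u) (x - u) := by
        by_contra hC
        push_neg at hC
        have hQ0ne : kappa (v - u) (t1 - u) ≠ 0 := ne_of_gt hQ0
        have hdec := vec_decomp (d := x - u) hQ0ne
        set α : ℝ := kappa (x - u) (t1 - u) / kappa (v - u) (t1 - u) with hα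
        set β : ℝ := kappa (v - u) (x - u) / kappa (v - u) (t1 - u) with hβ
        have hαpos : 0 < α := by
          rw [hα, kappa_anti]
          apply div_pos _ hQ0
          linarith
        have hβpos : 0 < β := div_pos hA hQ0
        set t : ℝ := 1 / (α + β + 1) with htdef
        have htpos : 0 < t := by rw [htdef]; positivity
        have ht1' : t ≤ 1 := by
          rw [htdef]
          rw [div_le_one (by positivity)]
          linarith
        have hcoef : 1 - t * α - t * β = t := by
          rw [htdef]; field_simp; ring
        have hmem : (1 - t*α - t*β) • u + (t*α) • v + (t*β) • t1
            ∈ interior (convexHull ℝ ({u, v, t1} : Set Pt)) := by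
          apply mem_int_triangle hQ0ne (by rw [hcoef]; exact htpos)
            (mul_pos htpos hαpos) (mul_pos htpos hβpos) (by ring)
        have heq : (1 - t*α - t*β) • u + (t*α) • v + (t*β) • t1 = (1 - t) • u + t • x := by
          have hx' : x = u + α • (v - u) + β • (t1 - u) := by
            nth_rewrite 1 [show x = u + (x - u) by abel]
            rw [hdec]
            abel
          rw [hx']
          module
        rw [heq] at hmem
        have hmem' : (1 - t) • u + t • x ∈ interior (convexHull ℝ (T1 : Set Pt)) := by
          apply interior_mono (convexHull_mono _) hmem
          intro y hy
          rcases hy with rfl | rfl | rfl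
          · exact huT1
          · exact hvT1
          · exact ht1T1
        exact hseg T1 hT1 (by exact hT1E) t htpos.le ht1' hmem'
      have hGP := kappa_GP (v - u) (s1 - u) (t1 - u) (x - u)
      have hB : kappa (s1 - u) (x - u) < 0 := by
        nlinarith [mul_nonpos_of_nonpos_of_nonneg hP0.le hC,
          mul_neg_of_pos_of_neg hA hR]
      rw [kappa_sub_left]
      linarith
  -- conclude : S2 ∪ T2 lies in a closed half-plane through u, contradicting reflexness
  have hsub2 : convexHull ℝ ((S2 ∪ T2 : Finset Pt) : Set Pt)
      ⊆ {y : Pt | kappa ((s1 - u) - (t1 - u)) (y - u) ≤ 0} := by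
    apply convexHull_min _ (convex_halfplane _ _)
    rw [Finset.coe_union]
    rintro x (hx | hx)
    · exact hbound S2 hS2 hS1S2 hT1S2 huS2 hwS2 x hx
    · exact hbound T2 hT2 hS1T2 hT1T2 huT2 hwT2 x hx
  refine not_mem_interior_of_halfplane (d0 := v - u) hsub2 ?_ hrefl2
  have heq : kappa ((s1 - u) - (t1 - u)) (v - u)
      = kappa (v - u) (t1 - u) - kappa (v - u) (s1 - u) := by
    simp only [kappa, Prod.fst_sub, Prod.snd_sub]; ring
  rw [heq]
  linarith

end ArcsAux

/-- **Remark 1(4).** If `Π` has no deletable edges and `u → v`, `u → w` are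
arcs of `→G(Π)`, then `uv` and `uw` lie on the boundary of a common polygon. -/
theorem arcs_from_common_vertex_share_polygon
    (P : Finset Pt) (hP : 3 ≤ P.card) (hgp : GenPos P)
    (D : Finset (Finset Pt)) (hD : IsConvexDecomp P D)
    (hnodel : ∀ a b, ¬ Deletable P D a b)
    (u v w : Pt) (h1 : Arc P D u v) (h2 : Arc P D u w) :
    ∃ S ∈ D, IsSideOf S u v ∧ IsSideOf S u w := by
  classical
  obtain ⟨-, S1, hS1, T1, hT1, hS1T1, sS1v, sT1v, hr1⟩ := h1
  obtain ⟨-, S2, hS2, T2, hT2, hS2T2, sS2w, sT2w, hr2⟩ := h2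
  by_cases hvw : v = w
  · exact ⟨S1, hS1, sS1v, hvw ▸ sS1v⟩
  by_cases c1 : IsSideOf S1 u w
  · exact ⟨S1, hS1, sS1v, c1⟩
  by_cases c2 : IsSideOf T1 u w
  · exact ⟨T1, hT1, sT1v, c2⟩
  by_cases c3 : IsSideOf S2 u v
  · exact ⟨S2, hS2, c3, sS2w⟩
  by_cases c4 : IsSideOf T2 u v
  · exact ⟨T2, hT2, c4, sT2w⟩
  exfalso
  have hS1S2 : S1 ≠ S2 := fun h => c1 (h ▸ sS2w)
  have hS1T2 : S1 ≠ T2 := fun h => c1 (h ▸ sT2w)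
  have hT1S2 : T1 ≠ S2 := fun h => c2 (h ▸ sS2w)
  have hT1T2 : T1 ≠ T2 := fun h => c2 (h ▸ sT2w)
  have hpoly := hD.1
  have hdisjD := hD.2.1
  have hS1c : 3 ≤ S1.card := (hpoly S1 hS1).2.1
  have hT1c : 3 ≤ T1.card := (hpoly T1 hT1).2.1
  have dS1 := ArcsAux.side_sign sS1v hS1c
  have dT1 := ArcsAux.side_sign sT1v hT1c
  obtain ⟨s, hsS, hsu, hsv⟩ := ArcsAux.exists_third hS1c u v
  obtain ⟨t, htT, htu, htv⟩ := ArcsAux.exists_third hT1c u v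
  have sub1 : ({u, v, s} : Set Pt) ⊆ (S1 : Set Pt) := by
    intro y hy
    rcases hy with rfl | rfl | rfl
    · exact sS1v.1
    · exact sS1v.2.1
    · exact hsS
  have sub2 : ({u, v, t} : Set Pt) ⊆ (T1 : Set Pt) := by
    intro y hy
    rcases hy with rfl | rfl | rfl
    · exact sT1v.1
    · exact sT1v.2.1
    · exact htT
  rcases dS1 with dS1 | dS1 <;> rcases dT1 with dT1 | dT1
  · -- both negative : S1 and T1 on the same side, impossible
    have h1' := dS1 s hsS hsu hsv
    have h2' := dT1 t htT htu htv
    obtain ⟨q, hq1, hq2⟩ := ArcsAux.common_interior_point (ne_of_lt h1') (ne_of_lt h2')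
      (mul_pos_of_neg_of_neg h1' h2')
    have hmem : q ∈ interior (convexHull ℝ (S1 : Set Pt))
        ∩ interior (convexHull ℝ (T1 : Set Pt)) :=
      ⟨interior_mono (convexHull_mono sub1) hq1, interior_mono (convexHull_mono sub2) hq2⟩
    rw [hdisjD S1 hS1 T1 hT1 hS1T1] at hmem
    exact hmem
  · -- S1 negative, T1 positive : apply the key lemma directly
    exact ArcsAux.key P hgp D hD u v w hvw S1 T1 S2 T2 hS1 hT1 hS2 hT2 hS1T1 hS1S2 hS1T2
      hT1S2 hT1T2 sS1v sT1v sS2w sT2w dS1 dT1 hr1 hr2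
  · -- S1 positive, T1 negative : apply the key lemma with roles swapped
    rw [Finset.union_comm] at hr1
    exact ArcsAux.key P hgp D hD u v w hvw T1 S1 S2 T2 hT1 hS1 hS2 hT2 hS1T1.symm hT1S2
      hT1T2 hS1S2 hS1T2 sT1v sS1v sS2w sT2w dT1 dS1 hr1 hr2
  · -- both positive : impossible
    have h1' := dS1 s hsS hsu hsv
    have h2' := dT1 t htT htu htv
    obtain ⟨q, hq1, hq2⟩ := ArcsAux.common_interior_point (ne_of_gt h1') (ne_of_gt h2')
      (mul_pos h1' h2')
    have hmem : q ∈ interior (convexHull ℝ (S1 : Set Pt))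
        ∩ interior (convexHull ℝ (T1 : Set Pt)) :=
      ⟨interior_mono (convexHull_mono sub1) hq1, interior_mono (convexHull_mono sub2) hq2⟩
    rw [hdisjD S1 hS1 T1 hT1 hS1T1] at hmem
    exact hmem
end
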